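/- arXiv:2308.06016 — 2 statements merged into one kernel-verified Lean document; each statement's English description precedes it below -/
import Mathlib

section
/- Let G_ω be an edge-weighted star graph with n vertices, i.e., the graph on vertex set [n] whose edges are {i, n} for i = 1, …, n−1, each with a positive integer weight, and let I = I(G_ω) be its edge ideal. If I is integrally closed, then I is normal, i.e., I^k is integrally closed for every k ≥ 1. -/
open MvPolynomial

/-- The edge ideal of an edge-weighted graph `G` with weight function `w`. -/
noncomputable def edgeIdeal (K : Type*) [Field K] {n : ℕ}
    (G : SimpleGraph (Fin n)) (w : Sym2 (Fin n) → ℕ) :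
    Ideal (MvPolynomial (Fin n) K) :=
  Ideal.span {m | ∃ i j : Fin n, G.Adj i j ∧ m = X i ^ w s(i, j) * X j ^ w s(i, j)}

/-- The integral closure of an ideal `I`. -/
def intClosure {R : Type*} [CommRing R] (I : Ideal R) : Set R :=
  {f | ∃ k : ℕ, 0 < k ∧ ∃ c : ℕ → R,
    (∀ i ∈ Finset.Icc 1 k, c i ∈ I ^ i) ∧
    f ^ k + ∑ i ∈ Finset.Icc 1 k, c i * f ^ (k - i) = 0}

/-- An ideal is integrally closed if it equals its integral closure. -/
def IsIntClosed {R : Type*} [CommRing R] (I : Ideal R) : Prop :=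
  intClosure I = ↑I

/-!
If two leaves `i, j` of the star with center `c` carry weights `p, q ≥ 2`, then
`f = x_i^(p-1) x_j^(q-1) x_c^(p+q)` is not in `I` although `f² ∈ I²`. So when `I` is integrally
closed, at most one leaf `h` has weight `b + 1 > 1` and all others have weight `1`.

For such an ideal, a monomial lies in `I^k` as soon as its exponents satisfy three linear
inequalities: a generator can then be split off so that the rest satisfies them for `k - 1`.
Each inequality is a lower bound `k t ≤ weight u` for a weighted order, which is a valuation
on the polynomial ring, and ideals defined by valuation bounds are integrally closed; every
monomial of an element of the integral closure of `I^k` therefore satisfies them.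
-/

open Finsupp

section IntClosure

variable {R : Type*} [CommRing R]

theorem subset_intClosure (I : Ideal R) : (I : Set R) ⊆ intClosure I := by
  intro f hf
  refine ⟨1, one_pos, fun _ => -f, fun i hi => ?_, by simp⟩
  obtain rfl : i = 1 := by simpa using hi
  simpa using hf

theorem intClosure_mono {I J : Ideal R} (h : I ≤ J) : intClosure I ⊆ intClosure J := by
  rintro f ⟨m, hm, a, ha, hf⟩
  exact ⟨m, hm, a, fun i hi => Ideal.pow_right_mono h i (ha i hi), hf⟩

theorem isIntClosed_of_intClosure_subset {I : Ideal R} (h : intClosure I ⊆ I) :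
    IsIntClosed I :=
  h.antisymm (subset_intClosure I)

theorem mem_intClosure_of_pow_mem_pow {I : Ideal R} {f : R} {k : ℕ} (hk : 0 < k)
    (h : f ^ k ∈ I ^ k) : f ∈ intClosure I := by
  classical
  refine ⟨k, hk, fun i => if i = k then -f ^ k else 0, fun i _ => ?_, ?_⟩
  · dsimp only
    split_ifs with hi
    · subst hi; exact neg_mem h
    · exact zero_mem _
  · simp only [ite_mul, zero_mul, Finset.sum_ite_eq', Finset.mem_Icc]
    simp [Nat.one_le_iff_ne_zero.2 hk.ne']

theorem isIntClosed_bot [IsReduced R] : IsIntClosed (⊥ : Ideal R) := by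
  refine isIntClosed_of_intClosure_subset ?_
  rintro f ⟨m, -, a, ha, hf⟩
  have ha0 : ∀ i ∈ Finset.Icc 1 m, a i = 0 := fun i hi => by
    simpa [Ideal.bot_pow (Nat.one_le_iff_ne_zero.1 (Finset.mem_Icc.1 hi).1)] using ha i hi
  rw [Finset.sum_eq_zero fun i hi => by rw [ha0 i hi, zero_mul], add_zero] at hf
  exact (IsReduced.eq_zero f ⟨m, hf⟩).symm ▸ zero_mem _

end IntClosure

namespace AddValuation

variable {R : Type*} [CommRing R] (v : AddValuation R ℕ∞)

def geIdeal (c : ℕ∞) : Ideal R where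
  carrier := {x | c ≤ v x}
  add_mem' {x y} hx hy := (le_min hx hy).trans (v.map_add x y)
  zero_mem' := by simp
  smul_mem' r x hx := by
    simp only [Set.mem_ofPred_eq, smul_eq_mul, map_mul] at hx ⊢
    exact le_add_left hx

theorem mem_geIdeal {c : ℕ∞} {x : R} : x ∈ v.geIdeal c ↔ c ≤ v x := Iff.rfl

theorem geIdeal_pow_le (c : ℕ∞) (k : ℕ) : v.geIdeal c ^ k ≤ v.geIdeal (k • c) := by
  induction k with
  | zero => simp [Ideal.one_eq_top, SetLike.le_def, mem_geIdeal]
  | succ k ih =>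
    rw [pow_succ, succ_nsmul]
    refine Ideal.mul_le.2 fun x hx y hy => ?_
    rw [mem_geIdeal, map_mul]
    exact add_le_add (ih hx) hy

theorem isIntClosed_geIdeal (c : ℕ∞) : IsIntClosed (v.geIdeal c) := by
  refine isIntClosed_of_intClosure_subset ?_
  rintro f ⟨m, -, a, ha, hf⟩
  by_contra hfc
  have hlt : v f < c := not_le.1 hfc
  obtain ⟨d, hd⟩ := ENat.ne_top_iff_exists.1 (hlt.trans_le le_top).ne
  -- Every lower term of the integral equation has value `≥ i c + (m - i) d > m d = v (f ^ m)`.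
  have hterm : ∀ i ∈ Finset.Icc 1 m, ((m * d + 1 : ℕ) : ℕ∞) ≤ v (a i * f ^ (m - i)) := by
    intro i hi
    obtain ⟨hi1, him⟩ := Finset.mem_Icc.1 hi
    obtain ⟨j, rfl⟩ := Nat.exists_eq_add_of_le him
    have hdc : ((d + 1 : ℕ) : ℕ∞) ≤ c := by
      rw [Nat.cast_add_one]; exact Order.add_one_le_of_lt (hd ▸ hlt)
    calc (((i + j) * d + 1 : ℕ) : ℕ∞) ≤ ((i * (d + 1) + j * d : ℕ) : ℕ∞) :=
          Nat.cast_le.2 (by nlinarith)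
      _ = i • ((d + 1 : ℕ) : ℕ∞) + j • v f := by simp [← hd, nsmul_eq_mul]; ring
      _ ≤ v (a i) + v (f ^ j) := by
          rw [map_pow]
          gcongr
          exact (nsmul_le_nsmul_right hdc i).trans (v.geIdeal_pow_le c i (ha i hi))
      _ = v (a i * f ^ (i + j - i)) := by rw [map_mul, Nat.add_sub_cancel_left]
  have hpow : ((m * d + 1 : ℕ) : ℕ∞) ≤ v (f ^ m) := by
    rw [eq_neg_of_add_eq_zero_left hf, map_neg]
    exact v.map_le_sum hterm
  rw [map_pow, ← hd, nsmul_eq_mul] at hpow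
  norm_cast at hpow
  omega

end AddValuation

namespace MvPowerSeries

variable {σ R : Type*} [CommRing R] [IsDomain R]

noncomputable def weightedOrderValuation (w : σ → ℕ) :
    AddValuation (MvPowerSeries σ R) ℕ∞ :=
  AddValuation.of (weightedOrder w) (weightedOrder_zero w) (weightedOrder_one w)
    (fun _ _ => min_weightedOrder_le_add w) (weightedOrder_mul w)

end MvPowerSeries

namespace MvPolynomial

variable {σ R : Type*}

section CommSemiring

variable [CommSemiring R] {I : Ideal (MvPolynomial σ R)}

theorem mem_of_forall_monomial_mem {f : MvPolynomial σ R}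
    (h : ∀ d ∈ f.support, monomial d (1 : R) ∈ I) : f ∈ I := by
  rw [← support_sum_monomial_coeff f]
  refine Ideal.sum_mem _ fun d hd => ?_
  rw [← mul_one (coeff d f), ← C_mul_monomial]
  exact I.mul_mem_left _ (h d hd)

theorem monomial_mem_pow_of_forall_exists_le (P : ℕ → (σ →₀ ℕ) → Prop)
    (hP : ∀ k d, P (k + 1) d → ∃ s ≤ d, monomial s (1 : R) ∈ I ∧ P k (d - s)) :
    ∀ k d, P k d → monomial d (1 : R) ∈ I ^ k
  | 0, d, _ => by simp
  | k + 1, d, hd => by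
    obtain ⟨s, hsd, hs, hk⟩ := hP k d hd
    rw [← add_tsub_cancel_of_le hsd, ← mul_one (1 : R), ← monomial_mul, pow_succ']
    exact Ideal.mul_mem_mul hs (monomial_mem_pow_of_forall_exists_le P hP k _ hk)

end CommSemiring

theorem le_weight_of_mem_intClosure_pow [CommRing R] [IsDomain R] {S : Set (σ →₀ ℕ)}
    {w : σ → ℕ} {t k : ℕ} (hS : ∀ s ∈ S, t ≤ weight w s) {f : MvPolynomial σ R}
    (hf : f ∈ intClosure (Ideal.span ((fun s => monomial s (1 : R)) '' S) ^ k))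
    {d : σ →₀ ℕ} (hd : d ∈ f.support) : k * t ≤ weight w d := by
  let v := (MvPowerSeries.weightedOrderValuation w).comap
    (coeToMvPowerSeries.ringHom (σ := σ) (R := R))
  have hspan : Ideal.span ((fun s => monomial s (1 : R)) '' S) ≤ v.geIdeal t := by
    rw [Ideal.span_le]
    rintro _ ⟨s, hs, rfl⟩
    change (t : ℕ∞) ≤ MvPowerSeries.weightedOrder w (monomial s (1 : R) : MvPowerSeries σ R)
    rw [coe_monomial, MvPowerSeries.weightedOrder_monomial_of_ne_zero w one_ne_zero]
    exact_mod_cast hS s hs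
  have hv : (↑(k * t) : ℕ∞) ≤ v f := by
    have := v.isIntClosed_geIdeal (k • t) ▸
      intClosure_mono ((Ideal.pow_right_mono hspan k).trans (v.geIdeal_pow_le t k)) hf
    simpa [AddValuation.mem_geIdeal] using this
  have hvd : v f ≤ weight w d :=
    MvPowerSeries.weightedOrder_le w
      (by rwa [coeToMvPowerSeries.ringHom_apply, coeff_coe, ← mem_support_iff])
  exact_mod_cast hv.trans hvd

end MvPolynomial

namespace Finsupp

variable {σ : Type*}

theorem weight_tsub {w : σ → ℕ} {d s : σ →₀ ℕ} (hsd : s ≤ d) :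
    weight w (d - s) = weight w d - weight w s := by
  have := map_add (weight w) (d - s) s
  rw [tsub_add_cancel_of_le hsd] at this
  omega

theorem weight_single_add_single (w : σ → ℕ) (i j : σ) (a b : ℕ) :
    weight w (single i a + single j b) = a * w i + b * w j := by
  simp [weight_single]

theorem single_add_single_le {i j : σ} {a b : ℕ} {d : σ →₀ ℕ} (hij : i ≠ j) (ha : a ≤ d i)
    (hb : b ≤ d j) : single i a + single j b ≤ d := by
  classical
  intro t
  simp only [coe_add, Pi.add_apply, single_apply]
  split_ifs <;> subst_vars <;> first | exact absurd rfl hij | omega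

end Finsupp

section Star

variable {σ : Type*} (R : Type*) [CommRing R]

def starExponents (c : σ) (W : σ → ℕ) : Set (σ →₀ ℕ) :=
  (fun i => single i (W i) + single c (W i)) '' {c}ᶜ

noncomputable def starIdeal (c : σ) (W : σ → ℕ) : Ideal (MvPolynomial σ R) :=
  Ideal.span ((fun s => monomial s (1 : R)) '' starExponents c W)

variable {R} {c : σ} {W : σ → ℕ}

theorem starIdeal_eq_bot (h : ∀ i, i = c) : starIdeal R c W = ⊥ := by
  have : ({c}ᶜ : Set σ) = ∅ := by ext i; simp [h i]
  simp [starIdeal, starExponents, this]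

theorem monomial_mem_starIdeal {i : σ} (hi : i ≠ c) :
    monomial (single i (W i) + single c (W i)) (1 : R) ∈ starIdeal R c W :=
  Ideal.subset_span ⟨_, ⟨i, hi, rfl⟩, rfl⟩

theorem le_one_of_isIntClosed_starIdeal [Nontrivial R] (hW : ∀ i ≠ c, 0 < W i)
    (hI : IsIntClosed (starIdeal R c W)) {i j : σ} (hi : i ≠ c) (hj : j ≠ c) (hij : i ≠ j)
    (hWi : 2 ≤ W i) : W j ≤ 1 := by
  classical
  by_contra! hWj
  set ν := single i (W i - 1) + single j (W j - 1) + single c (W i + W j)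
  have hsq : monomial ν (1 : R) ^ 2 ∈ starIdeal R c W ^ 2 := by
    have hν : monomial ν (1 : R) ^ 2 = monomial (single i (W i) + single c (W i)) 1 *
        monomial (single j (W j) + single c (W j)) 1 *
        monomial (single i (W i - 2) + single j (W j - 2) + single c (W i + W j)) 1 := by
      simp only [monomial_pow, monomial_mul, one_pow, mul_one]
      refine congrArg (fun s => monomial s (1 : R)) (Finsupp.ext fun t => ?_)
      simp only [ν, Finsupp.coe_add, Finsupp.coe_smul, Pi.add_apply, Pi.smul_apply, smul_eq_mul,
        single_apply]
      split_ifs <;> subst_vars <;> first | contradiction | omega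
    rw [hν, pow_two]
    exact Ideal.mul_mem_right _ _ (Ideal.mul_mem_mul (monomial_mem_starIdeal hi)
      (monomial_mem_starIdeal hj))
  have hmem : monomial ν (1 : R) ∈ starIdeal R c W := by
    rw [← SetLike.mem_coe, ← hI]
    exact mem_intClosure_of_pow_mem_pow two_pos hsq
  obtain ⟨_, ⟨l, hl, rfl⟩, hle⟩ := mem_ideal_span_monomial_image.1 hmem ν
    (by simp [support_monomial])
  have hl' := hle l
  simp only [ν, Finsupp.coe_add, Pi.add_apply, single_apply, Set.mem_compl_singleton_iff]
    at hl' hl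
  have hWl := hW l hl
  split_ifs at hl' <;> subst_vars <;> first | contradiction | omega

theorem exists_heavy_leaf_of_isIntClosed_starIdeal [Nontrivial R] (hW : ∀ i ≠ c, 0 < W i)
    (hI : IsIntClosed (starIdeal R c W)) {i₀ : σ} (hi₀ : i₀ ≠ c) :
    ∃ h ≠ c, ∀ i ≠ c, i ≠ h → W i = 1 := by
  by_cases hheavy : ∃ h ≠ c, 2 ≤ W h
  · obtain ⟨h, hhc, hWh⟩ := hheavy
    exact ⟨h, hhc, fun i hic hih =>
      (le_one_of_isIntClosed_starIdeal hW hI hhc hic (Ne.symm hih) hWh).antisymm (hW i hic)⟩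
  · push Not at hheavy
    exact ⟨i₀, hi₀, fun i hic _ => by have := hW i hic; have := hheavy i hic; omega⟩

end Star

section HeavyStar

variable {σ : Type*} [DecidableEq σ] {c h : σ} {b : ℕ} {W : σ → ℕ}

def centerWeight (c h : σ) (b : ℕ) : σ → ℕ :=
  fun t => if t = c then 1 else if t = h then 0 else b

def heavyLeafWeight (c h : σ) (b : ℕ) : σ → ℕ :=
  fun t => if t = c then 0 else if t = h then 1 else b + 1

/-- With `z = d c`, `p = d h` and `s` the total exponent of the other leaves, these are
`k ≤ z`, `k (b + 1) ≤ b s + z` and `k (b + 1) ≤ (b + 1) s + p`. -/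
def StarBounds (c h : σ) (b k : ℕ) (d : σ →₀ ℕ) : Prop :=
  k ≤ d c ∧ k * (b + 1) ≤ weight (centerWeight c h b) d ∧
    k * (b + 1) ≤ weight (heavyLeafWeight c h b) d

theorem weights_of_mem_starExponents (hWh : W h = b + 1)
    (hW : ∀ i ≠ c, i ≠ h → W i = 1) {s : σ →₀ ℕ} (hs : s ∈ starExponents c W) :
    1 ≤ s c ∧ weight (centerWeight c h b) s = b + 1 ∧
      weight (heavyLeafWeight c h b) s = b + 1 := by
  obtain ⟨l, hl, rfl⟩ := hs
  rw [Set.mem_compl_singleton_iff] at hl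
  simp only [weight_single_add_single, centerWeight, heavyLeafWeight]
  by_cases hlh : l = h
  · subst hlh
    simp [hl, hWh]
  · simp [hl, hlh, hW l hl hlh]

theorem exists_le_starBounds (hh : h ≠ c) (hWh : W h = b + 1)
    (hW : ∀ i ≠ c, i ≠ h → W i = 1) {k : ℕ} {d : σ →₀ ℕ} (hd : StarBounds c h b (k + 1) d) :
    ∃ s ≤ d, s ∈ starExponents c W ∧ StarBounds c h b k (d - s) := by
  obtain ⟨hc, hB, hC⟩ := hd
  rw [add_one_mul] at hB hC
  have peel : ∀ s ≤ d, s ∈ starExponents c W → k + s c ≤ d c →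
      StarBounds c h b k (d - s) := by
    intro s hsd hs hsc
    obtain ⟨-, hsB, hsC⟩ := weights_of_mem_starExponents hWh hW hs
    refine ⟨?_, ?_, ?_⟩
    · rw [tsub_apply]; omega
    · rw [weight_tsub hsd, hsB]; omega
    · rw [weight_tsub hsd, hsC]; omega
  by_cases hlight : ∃ l ≠ c, l ≠ h ∧ d l ≠ 0
  · obtain ⟨l, hlc, hlh, hdl⟩ := hlight
    have hs : single l 1 + single c 1 ∈ starExponents c W := hW l hlc hlh ▸ ⟨l, hlc, rfl⟩
    have hsd : single l 1 + single c 1 ≤ d := single_add_single_le hlc (by omega) (by omega)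
    exact ⟨_, hsd, hs, peel _ hsd hs (by simp [hlc]; omega)⟩
  · push Not at hlight
    have hd_eq : d = single h (d h) + single c (d c) := by
      ext t
      by_cases htc : t = c
      · subst htc; simp [hh]
      by_cases hth : t = h
      · subst hth; simp [htc]
      · simp [hlight t htc hth, Ne.symm htc, Ne.symm hth]
    have hBd : weight (centerWeight c h b) d = d c := by
      rw [hd_eq, weight_single_add_single]; simp [centerWeight, hh]
    have hCd : weight (heavyLeafWeight c h b) d = d h := by
      rw [hd_eq, weight_single_add_single]; simp [heavyLeafWeight, hh]
    have hs : single h (b + 1) + single c (b + 1) ∈ starExponents c W := hWh ▸ ⟨h, hh, rfl⟩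
    have hsd : single h (b + 1) + single c (b + 1) ≤ d :=
      single_add_single_le hh (by omega) (by omega)
    refine ⟨_, hsd, hs, peel _ hsd hs ?_⟩
    simp only [Finsupp.coe_add, Pi.add_apply, single_eq_same, single_eq_of_ne' hh]
    nlinarith

theorem isIntClosed_starIdeal_pow {R : Type*} [CommRing R] [IsDomain R] (hh : h ≠ c)
    (hWh : W h = b + 1) (hW : ∀ i ≠ c, i ≠ h → W i = 1) (k : ℕ) :
    IsIntClosed (starIdeal R c W ^ k) := by
  refine isIntClosed_of_intClosure_subset fun f hf => mem_of_forall_monomial_mem fun d hd => ?_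
  have hgen := fun s (hs : s ∈ starExponents c W) => weights_of_mem_starExponents hWh hW hs
  refine monomial_mem_pow_of_forall_exists_le (StarBounds c h b) (fun k d hd => ?_) k d
    ⟨?_, ?_, ?_⟩
  · obtain ⟨s, hsd, hs, hk⟩ := exists_le_starBounds hh hWh hW hd
    exact ⟨s, hsd, Ideal.subset_span ⟨s, hs, rfl⟩, hk⟩
  · have := le_weight_of_mem_intClosure_pow (w := Pi.single c 1) (t := 1)
      (fun s hs => by simpa [weight_single_one_apply] using (hgen s hs).1) hf hd
    rwa [mul_one, weight_single_one_apply] at this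
  · exact le_weight_of_mem_intClosure_pow (fun s hs => (hgen s hs).2.1.ge) hf hd
  · exact le_weight_of_mem_intClosure_pow (fun s hs => (hgen s hs).2.2.ge) hf hd

end HeavyStar

theorem edgeIdeal_eq_starIdeal (K : Type*) [Field K] {n : ℕ} (G : SimpleGraph (Fin n))
    (w : Sym2 (Fin n) → ℕ) (c : Fin n) (hG : ∀ i j, G.Adj i j ↔ i ≠ j ∧ (i = c ∨ j = c)) :
    edgeIdeal K G w = starIdeal K c (fun i => w s(i, c)) := by
  have hXX : ∀ i m, (X i : MvPolynomial (Fin n) K) ^ m * X c ^ m =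
      monomial (single i m + single c m) 1 := fun i m => by
    rw [X_pow_eq_monomial, X_pow_eq_monomial, monomial_mul, one_mul]
  refine congrArg Ideal.span (Set.ext fun m => ⟨?_, ?_⟩)
  · rintro ⟨i, j, hadj, rfl⟩
    obtain ⟨hij, rfl | rfl⟩ := (hG i j).1 hadj
    · rw [Sym2.eq_swap, mul_comm]
      exact ⟨_, ⟨j, Ne.symm hij, rfl⟩, (hXX j _).symm⟩
    · exact ⟨_, ⟨i, hij, rfl⟩, (hXX i _).symm⟩
  · rintro ⟨_, ⟨i, hi, rfl⟩, rfl⟩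
    exact ⟨i, c, (hG i c).2 ⟨hi, Or.inr rfl⟩, (hXX i _).symm⟩

/-- Let `G_ω` be an edge-weighted star graph on `n` vertices (every edge joins a vertex to
the center, the vertex `n`, i.e. the last element of `Fin n`). If the edge ideal
`I(G_ω)` is integrally closed, then it is normal: every power `I(G_ω)^k`, `k ≥ 1`,
is integrally closed. -/
theorem edgeIdeal_star_normal_of_intClosed
    (K : Type*) [Field K] {n : ℕ} (hn : 1 ≤ n)
    (G : SimpleGraph (Fin n)) (w : Sym2 (Fin n) → ℕ)
    (hG : ∀ i j : Fin n, G.Adj i j ↔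
      (i ≠ j ∧ (i = (⟨n - 1, by omega⟩ : Fin n) ∨ j = (⟨n - 1, by omega⟩ : Fin n))))
    (hw : ∀ e ∈ G.edgeSet, 1 ≤ w e)
    (hic : IsIntClosed (edgeIdeal K G w)) :
    ∀ k : ℕ, 1 ≤ k → IsIntClosed (edgeIdeal K G w ^ k) := by
  intro k hk
  set c : Fin n := ⟨n - 1, by omega⟩
  rw [edgeIdeal_eq_starIdeal K G w c hG] at hic ⊢
  have hW : ∀ i ≠ c, 0 < w s(i, c) := fun i hi =>
    hw _ (G.mem_edgeSet.2 ((hG i c).2 ⟨hi, Or.inr rfl⟩))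
  by_cases hleaf : ∃ i, i ≠ c
  · obtain ⟨i₀, hi₀⟩ := hleaf
    obtain ⟨h, hhc, hlight⟩ := exists_heavy_leaf_of_isIntClosed_starIdeal hW hic hi₀
    obtain ⟨b, hb⟩ := Nat.exists_eq_add_of_le' (hW h hhc)
    exact isIntClosed_starIdeal_pow hhc hb hlight k
  · push Not at hleaf
    rw [starIdeal_eq_bot hleaf, Ideal.bot_pow (by omega)]
    exact isIntClosed_bot
end

section
/- Let n = 2r − 1 be odd with r ≥ 2 and let a = (a_1,…,a_n) be a vector of nonnegative integers with a_{2i−1} ≥ a_{2i} for each i = 1, …, r−1. Suppose y = (y_1,…,y_{n−1}) is a vector of nonnegative real numbers satisfying y_1 ≤ a_1, y_{j−1} + y_j ≤ a_j for each j = 2, …, n−1, and y_{n−1} ≤ a_n. Let h = ⌈y_1 + ⋯ + y_{n−1}⌉. Then the monomial x^a = x_1^{a_1} ⋯ x_n^{a_n} is divisible by a product of h monomials from the set {x_1 x_2, x_2 x_3, …, x_{n−1} x_n}. -/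
open MvPolynomial Finset

/-!
Put `S i = y 1 + ⋯ + y i` and `c i = ⌈S i⌉ - ⌈S (i - 1)⌉`. These weights sum to `⌈S (n - 1)⌉`, and
`x j` occurs in `∏ (x i * x (i + 1)) ^ c i` with exponent
`c (j - 1) + c j = ⌈S j⌉ - ⌈S (j - 2)⌉ ≤ ⌈S (j - 2) + a j⌉ - ⌈S (j - 2)⌉ = a j`,
because `S j - S (j - 2) = y (j - 1) + y j ≤ a j` and `S (j - 2) ≥ 0`.
-/

namespace Finset

theorem prod_Icc_mul_succ_pow {M : Type*} [CommMonoid M] (x : ℕ → M) {c : ℕ → ℕ} {m : ℕ}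
    (hc : ∀ i ∉ Icc 1 m, c i = 0) :
    ∏ i ∈ Icc 1 m, (x i * x (i + 1)) ^ c i = ∏ j ∈ Icc 1 (m + 1), x j ^ (c (j - 1) + c j) := by
  have hlow : ∏ i ∈ Icc 1 m, x i ^ c i = ∏ j ∈ Icc 1 (m + 1), x j ^ c j :=
    prod_subset (Icc_subset_Icc_right m.le_succ) fun j _ hj => by rw [hc j hj, pow_zero]
  have hhigh : ∏ i ∈ Icc 1 m, x (i + 1) ^ c i = ∏ j ∈ Icc 1 (m + 1), x j ^ c (j - 1) := by
    rw [prod_subset (Icc_subset_Icc_left zero_le_one) fun i _ hi => by rw [hc i hi, pow_zero],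
      show Icc 1 (m + 1) = (Icc 0 m).map (addRightEmbedding 1) by simp, prod_map]
    simp
  simp_rw [mul_pow, prod_mul_distrib, pow_add, prod_mul_distrib, hlow, hhigh, mul_comm]

end Finset

section CeilIncrement

variable {S : ℕ → ℝ}

noncomputable def ceilIncrement (S : ℕ → ℝ) (i : ℕ) : ℕ := ⌈S i⌉₊ - ⌈S (i - 1)⌉₊

@[simp]
theorem ceilIncrement_zero : ceilIncrement S 0 = 0 := by simp [ceilIncrement]

theorem ceilIncrement_eq_zero {i : ℕ} (h : S i = S (i - 1)) : ceilIncrement S i = 0 := by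
  simp [ceilIncrement, h]

theorem sum_Icc_ceilIncrement (hS : Monotone S) (m : ℕ) :
    ∑ i ∈ Icc 1 m, ceilIncrement S i = ⌈S m⌉₊ - ⌈S 0⌉₊ := by
  induction m with
  | zero => simp
  | succ m ih =>
    have h₁ : ⌈S m⌉₊ ≤ ⌈S (m + 1)⌉₊ := Nat.ceil_le_ceil (hS m.le_succ)
    have h₂ : ⌈S 0⌉₊ ≤ ⌈S m⌉₊ := Nat.ceil_le_ceil (hS m.zero_le)
    rw [sum_Icc_succ_top (by omega), ih, ceilIncrement, Nat.add_sub_cancel]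
    omega

theorem ceilIncrement_add_succ_le (hS : Monotone S) (hS0 : 0 ≤ S 0) {j t : ℕ}
    (h : S (j + 1) ≤ S (j - 1) + t) : ceilIncrement S j + ceilIncrement S (j + 1) ≤ t := by
  have hceil : ⌈S (j + 1)⌉₊ ≤ ⌈S (j - 1)⌉₊ + t := by
    rw [← Nat.ceil_add_natCast (hS0.trans (hS (Nat.zero_le _)))]
    exact Nat.ceil_le_ceil h
  have h₁ : ⌈S (j - 1)⌉₊ ≤ ⌈S j⌉₊ := Nat.ceil_le_ceil (hS (Nat.sub_le j 1))
  have h₂ : ⌈S j⌉₊ ≤ ⌈S (j + 1)⌉₊ := Nat.ceil_le_ceil (hS j.le_succ)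
  simp only [ceilIncrement, Nat.add_sub_cancel]
  omega

end CeilIncrement

theorem exists_path_edge_weights_of_fractional {m : ℕ} (hm : 1 ≤ m) {y : ℕ → ℝ} {a : ℕ → ℕ}
    (hy0 : ∀ i ∈ Icc 1 m, 0 ≤ y i) (hy1 : y 1 ≤ a 1)
    (hy2 : ∀ j ∈ Icc 2 m, y (j - 1) + y j ≤ a j) (hy3 : y m ≤ a (m + 1)) :
    ∃ c : ℕ → ℕ, ∑ i ∈ Icc 1 m, c i = ⌈∑ i ∈ Icc 1 m, y i⌉₊ ∧ (∀ i ∉ Icc 1 m, c i = 0) ∧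
      ∀ j ∈ Icc 1 (m + 1), c (j - 1) + c j ≤ a j := by
  -- truncating at `m` makes the weights vanish beyond the last edge
  set S : ℕ → ℝ := fun i => ∑ k ∈ Icc 1 (min i m), y k
  have hS_mono : Monotone S := fun i j hij =>
    sum_le_sum_of_subset_of_nonneg (Icc_subset_Icc_right (min_le_min_right m hij))
      fun k hk _ => hy0 k (Icc_subset_Icc_right (min_le_right j m) hk)
  have hS_zero : S 0 = 0 := by simp [S]
  have hS_succ : ∀ i < m, S (i + 1) = S i + y (i + 1) := fun i hi => by
    simp only [S, min_eq_left hi.le, min_eq_left hi.nat_succ_le]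
    exact sum_Icc_succ_top (by omega) y
  have hS_top : ∀ i, m ≤ i → S i = S m := fun i hi => by simp [S, min_eq_right hi]
  refine ⟨ceilIncrement S, ?_, fun i hi => ?_, fun j hj => ?_⟩
  · rw [sum_Icc_ceilIncrement hS_mono, hS_zero, Nat.ceil_zero, Nat.sub_zero]
    simp only [S, min_self]
  · rcases Nat.eq_zero_or_pos i with rfl | hi0
    · exact ceilIncrement_zero
    · have him : m < i := by simp only [mem_Icc, not_and_or] at hi; omega
      exact ceilIncrement_eq_zero ((hS_top i him.le).trans (hS_top (i - 1) (by omega)).symm)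
  obtain ⟨i, rfl⟩ : ∃ i, j = i + 1 := ⟨j - 1, by simp only [mem_Icc] at hj; omega⟩
  have him : i ≤ m := by simp only [mem_Icc] at hj; omega
  rw [Nat.add_sub_cancel]
  refine ceilIncrement_add_succ_le hS_mono hS_zero.ge ?_
  rcases Nat.eq_zero_or_pos i with rfl | hi0
  · simpa [hS_succ 0 hm, hS_zero] using hy1
  rcases him.lt_or_eq with him_lt | rfl
  · obtain ⟨k, rfl⟩ : ∃ k, i = k + 1 := ⟨i - 1, by omega⟩
    have := hy2 (k + 1 + 1) (by simp only [mem_Icc]; omega)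
    simp only [Nat.add_sub_cancel, hS_succ (k + 1) him_lt, hS_succ k (by omega)] at this ⊢
    linarith
  · obtain ⟨k, rfl⟩ : ∃ k, i = k + 1 := ⟨i - 1, by omega⟩
    rw [hS_top _ (by omega), hS_succ k (by omega), Nat.add_sub_cancel]
    linarith

theorem divisible_of_odd_pair_conditions_short_general
    (K : Type*) [Field K] (n : ℕ)
    (a : ℕ → ℕ) (y : ℕ → ℝ)
    (hy0 : ∀ i ∈ Finset.Icc 1 (n - 1), 0 ≤ y i)
    (hy1 : y 1 ≤ (a 1 : ℝ))
    (hy2 : ∀ j ∈ Finset.Icc 2 (n - 1), y (j - 1) + y j ≤ (a j : ℝ))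
    (hy3 : y (n - 1) ≤ (a n : ℝ)) :
    ∃ c : ℕ → ℕ,
      (∑ i ∈ Finset.Icc 1 (n - 1), c i = ⌈∑ i ∈ Finset.Icc 1 (n - 1), y i⌉₊) ∧
      (∏ i ∈ Finset.Icc 1 (n - 1), ((X i * X (i + 1) : MvPolynomial ℕ K) ^ c i)) ∣
        ∏ i ∈ Finset.Icc 1 n, (X i : MvPolynomial ℕ K) ^ a i := by
  rcases Nat.lt_or_ge n 2 with hn | hn
  · exact ⟨0, by simp [Icc_eq_empty_of_lt (show 1 > n - 1 by omega)]⟩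
  obtain ⟨m, rfl⟩ : ∃ m, n = m + 1 := ⟨n - 1, by omega⟩
  rw [Nat.add_sub_cancel] at hy0 hy2 hy3 ⊢
  obtain ⟨c, hsum, hsupp, hle⟩ := exists_path_edge_weights_of_fractional (by omega) hy0 hy1 hy2 hy3
  refine ⟨c, hsum, ?_⟩
  rw [prod_Icc_mul_succ_pow _ hsupp]
  exact prod_dvd_prod_of_dvd _ _ fun j hj => pow_dvd_pow _ (hle j hj)

/-- Lemma 4.5(4): let `n = 2r - 1` with `r ≥ 2` and `a = (a_1,…,a_n)` nonnegative
integers with `a_{2i-1} ≥ a_{2i}` for `i = 1,…,r-1`. If `y = (y_1,…,y_{n-1})` are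
nonnegative reals with `y_1 ≤ a_1`, `y_{j-1} + y_j ≤ a_j` for `j = 2,…,n-1`, and
`y_{n-1} ≤ a_n`, and `h = ⌈y_1 + ⋯ + y_{n-1}⌉`, then `x^a` is divisible by a product
of `h` monomials from `{x_1 x_2, …, x_{n-1} x_n}`. -/
theorem divisible_of_odd_pair_conditions_short
    (K : Type*) [Field K] (n r : ℕ) (hr : 2 ≤ r) (hn : n = 2 * r - 1)
    (a : ℕ → ℕ) (y : ℕ → ℝ)
    (ha : ∀ i ∈ Finset.Icc 1 (r - 1), a (2 * i) ≤ a (2 * i - 1))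
    (hy0 : ∀ i ∈ Finset.Icc 1 (n - 1), 0 ≤ y i)
    (hy1 : y 1 ≤ (a 1 : ℝ))
    (hy2 : ∀ j ∈ Finset.Icc 2 (n - 1), y (j - 1) + y j ≤ (a j : ℝ))
    (hy3 : y (n - 1) ≤ (a n : ℝ)) :
    ∃ c : ℕ → ℕ,
      (∑ i ∈ Finset.Icc 1 (n - 1), c i = ⌈∑ i ∈ Finset.Icc 1 (n - 1), y i⌉₊) ∧
      (∏ i ∈ Finset.Icc 1 (n - 1), ((X i * X (i + 1) : MvPolynomial ℕ K) ^ c i)) ∣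
        ∏ i ∈ Finset.Icc 1 n, (X i : MvPolynomial ℕ K) ^ a i :=
  divisible_of_odd_pair_conditions_short_general K n a y hy0 hy1 hy2 hy3
end
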